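/- For a Gaussian measure μ = 𝒩(m, Σ) on ℝⁿ with Σ invertible and m ≠ 0, the scaling invariant inequality index τ(μ) defined via the whitened Fourier transform equals (2√e)⁻¹ (mᵀ Σ⁻¹ m)^{−1/2}, i.e. it is proportional to the reciprocal of the Mahalanobis norm of m. -/

import Mathlib

/-!
The whitened measure is the translate of the standard Gaussian by `a = W m`, i.e. the product
`∏ᵢ 𝒩(aᵢ, 1)`. Its characteristic function is `E(ξ) = exp (-i ξ·a - |ξ|²/2)` with gradient
`(-i a - ξ) E(ξ)`, so `∇f̂(0) f̂(ξ) - ∇f̂(ξ) = ξ E(ξ)` has norm `|ξ| e^{-|ξ|²/2}`, whose supremum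
`e^{-1/2}` is attained on the unit sphere. The denominator is `2 |∇f̂(0)| = 2 |a|`, and
`|a|² = mᵀ Σ⁻¹ m` because `W Σ Wᵀ = 1` forces `Σ⁻¹ = Wᵀ W`.
-/

open MeasureTheory ProbabilityTheory Matrix

noncomputable section

/-- The standard Gaussian measure on `ℝⁿ` (mean `0`, identity covariance). -/
def stdGaussian (n : ℕ) : Measure (Fin n → ℝ) :=
  Measure.pi fun _ => gaussianReal 0 1

/-- The characteristic function (Fourier transform) of `μ`. -/
def charF {n : ℕ} (μ : Measure (Fin n → ℝ)) (ξ : Fin n → ℝ) : ℂ :=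
  ∫ x, Complex.exp (-Complex.I * ∑ i, (ξ i : ℂ) * (x i : ℂ)) ∂μ

/-- The gradient of the characteristic function of `μ`. -/
def gradCharF {n : ℕ} (μ : Measure (Fin n → ℝ)) (ξ : Fin n → ℝ) (j : Fin n) : ℂ :=
  ∫ x, -Complex.I * (x j : ℂ) * Complex.exp (-Complex.I * ∑ i, (ξ i : ℂ) * (x i : ℂ)) ∂μ

/-- Euclidean norm of a complex vector. -/
def cN {n : ℕ} (v : Fin n → ℂ) : ℝ := Real.sqrt (∑ i, ‖v i‖ ^ 2)

/-- The scaling-invariant Fourier inequality index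
`τ(μ) = sup_ξ |∇f̂*(0) f̂*(ξ) − ∇f̂*(ξ)| / (2 |∇f̂*(0)|)`, computed from the
characteristic function `f̂*` of the whitened measure `μ*`. -/
def tauIdx {n : ℕ} (μstar : Measure (Fin n → ℝ)) : ℝ :=
  ⨆ ξ : Fin n → ℝ,
    cN (fun j => gradCharF μstar 0 j * charF μstar ξ - gradCharF μstar ξ j) /
      (2 * cN (gradCharF μstar 0))

open Complex
open scoped NNReal ENNReal

section GaussianReal

variable (μ : ℝ) (v : ℝ≥0) (t : ℝ)

lemma integral_cexp_neg_I_mul_gaussianReal :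
    ∫ x, cexp (-I * (t * x)) ∂gaussianReal μ v = cexp (-I * t * μ - v * t ^ 2 / 2) := by
  calc _ = charFun (gaussianReal μ v) (-t) := by
        rw [charFun_apply_real]
        congr with x
        push_cast
        ring_nf
    _ = _ := by
        rw [charFun_gaussianReal]
        push_cast
        ring_nf

lemma hasDerivAt_charFun_gaussianReal :
    HasDerivAt (charFun (gaussianReal μ v))
      ((μ * I - v * t) * cexp (t * μ * I - v * t ^ 2 / 2)) t := by
  have hpoly : HasDerivAt (fun z : ℂ => z * μ * I - v * z ^ 2 / 2) (μ * I - v * t) t :=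
    ((((hasDerivAt_id' (t : ℂ)).mul_const (μ : ℂ)).mul_const I).fun_sub
      (((hasDerivAt_pow 2 (t : ℂ)).const_mul (v : ℂ)).div_const 2)).congr_deriv (by ring)
  rw [funext charFun_gaussianReal, mul_comm]
  exact hpoly.cexp.comp_ofReal

lemma integral_mul_cexp_neg_I_mul_gaussianReal :
    ∫ x, (x : ℂ) * cexp (-I * (t * x)) ∂gaussianReal μ v
      = (μ - I * v * t) * cexp (-I * t * μ - v * t ^ 2 / 2) := by
  have hL : MemLp id ((1 : ℕ) : ℝ≥0∞) (gaussianReal μ v) := by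
    simpa using memLp_id_gaussianReal (μ := μ) (v := v) 1
  have h := iteratedDeriv_charFun (t := -t) hL
  rw [iteratedDeriv_one, (hasDerivAt_charFun_gaussianReal μ v (-t)).deriv] at h
  push_cast at h
  simp only [pow_one] at h
  rw [← mul_right_inj' I_ne_zero]
  calc _ = I * ∫ x, (x : ℂ) * cexp (-(t : ℂ) * x * I) ∂gaussianReal μ v := by
        simp only [neg_mul, mul_comm I, mul_assoc]
    _ = _ := by rw [← h]; ring_nf; rw [I_sq]; ring_nf

end GaussianReal

section ProductMeasure

variable {n : ℕ}

lemma stdGaussian_map_add (a : Fin n → ℝ) :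
    (stdGaussian n).map (· + a) = Measure.pi fun i => gaussianReal (a i) 1 := by
  have h := Measure.pi_map_pi (μ := fun _ : Fin n => gaussianReal 0 1)
    (f := fun i x => x + a i) fun _ => by fun_prop
  simp_rw [gaussianReal_map_add_const, zero_add] at h
  exact h

variable (μ : Fin n → Measure ℝ) [∀ i, SigmaFinite (μ i)] (ξ : Fin n → ℝ)

lemma charF_pi : charF (Measure.pi μ) ξ = ∏ i, ∫ x, cexp (-I * (ξ i * x)) ∂μ i := by
  rw [charF, ← integral_fintype_prod_eq_prod]
  simp_rw [Finset.mul_sum, exp_sum]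

lemma gradCharF_pi (j : Fin n) :
    gradCharF (Measure.pi μ) ξ j
      = ∏ i, ∫ x, (if i = j then -I * x else 1) * cexp (-I * (ξ i * x)) ∂μ i := by
  rw [gradCharF, ← integral_fintype_prod_eq_prod]
  simp_rw [Finset.prod_mul_distrib, Finset.prod_ite_eq', Finset.mem_univ, if_true,
    Finset.mul_sum, exp_sum]

end ProductMeasure

section WhitenedGaussian

variable {n : ℕ} (a ξ : Fin n → ℝ)

lemma charF_pi_gaussianReal :
    charF (Measure.pi fun i => gaussianReal (a i) 1) ξ
      = cexp (-I * ↑(ξ ⬝ᵥ a) - ↑(ξ ⬝ᵥ ξ) / 2) := by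
  simp_rw [charF_pi, integral_cexp_neg_I_mul_gaussianReal, ← exp_sum, dotProduct]
  push_cast
  rw [Finset.mul_sum, Finset.sum_div, ← Finset.sum_sub_distrib]
  exact congrArg cexp (Finset.sum_congr rfl fun i _ => by ring)

lemma gradCharF_pi_gaussianReal (j : Fin n) :
    gradCharF (Measure.pi fun i => gaussianReal (a i) 1) ξ j
      = (-I * a j - ξ j) * cexp (-I * ↑(ξ ⬝ᵥ a) - ↑(ξ ⬝ᵥ ξ) / 2) := by
  have hfactor : ∀ i, ∫ x, (if i = j then -I * x else 1) * cexp (-I * (ξ i * x))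
        ∂gaussianReal (a i) 1
      = (if i = j then -I * a j - ξ j else 1) * ∫ x, cexp (-I * (ξ i * x)) ∂gaussianReal (a i) 1 := by
    intro i
    split_ifs with hij
    · subst hij
      simp_rw [mul_assoc, integral_const_mul, integral_mul_cexp_neg_I_mul_gaussianReal,
        integral_cexp_neg_I_mul_gaussianReal]
      push_cast
      ring_nf
      rw [I_sq]
      ring
    · simp_rw [one_mul]
  rw [gradCharF_pi, ← charF_pi_gaussianReal, charF_pi]
  simp_rw [hfactor, Finset.prod_mul_distrib, Finset.prod_ite_eq', Finset.mem_univ, if_true]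

end WhitenedGaussian

lemma cN_ofReal_mul {n : ℕ} (v : Fin n → ℝ) (z : ℂ) :
    cN (fun j => (v j : ℂ) * z) = √(v ⬝ᵥ v) * ‖z‖ := by
  simp_rw [cN, norm_mul, norm_real, Real.norm_eq_abs, mul_pow, sq_abs, ← Finset.sum_mul]
  rw [Real.sqrt_mul (Finset.sum_nonneg fun i _ => sq_nonneg (v i)), Real.sqrt_sq (norm_nonneg z)]
  simp only [dotProduct, sq]

lemma norm_cexp_neg_I_mul_sub (s q : ℝ) : ‖cexp (-I * s - q / 2)‖ = Real.exp (-q / 2) := by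
  rw [norm_exp]
  simp [neg_div]

lemma tauIdx_pi_gaussianReal {n : ℕ} (a : Fin n → ℝ) :
    tauIdx (Measure.pi fun i => gaussianReal (a i) 1)
      = (⨆ ξ : Fin n → ℝ, √(ξ ⬝ᵥ ξ) * Real.exp (-(ξ ⬝ᵥ ξ) / 2)) / (2 * √(a ⬝ᵥ a)) := by
  set G := Measure.pi fun i => gaussianReal (a i) 1
  have hgrad0 : gradCharF G 0 = fun j => (a j : ℂ) * (-I) := by
    funext j
    simp [G, gradCharF_pi_gaussianReal, mul_comm]
  have hnum : ∀ ξ, (fun j => gradCharF G 0 j * charF G ξ - gradCharF G ξ j)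
      = fun j => (ξ j : ℂ) * cexp (-I * ↑(ξ ⬝ᵥ a) - ↑(ξ ⬝ᵥ ξ) / 2) := by
    intro ξ
    funext j
    rw [hgrad0, charF_pi_gaussianReal, gradCharF_pi_gaussianReal]
    ring
  simp_rw [tauIdx, hnum, hgrad0, cN_ofReal_mul, norm_cexp_neg_I_mul_sub, norm_neg, norm_I, mul_one,
    div_eq_mul_inv]
  exact (Real.iSup_mul_of_nonneg (by positivity) _).symm

lemma mul_exp_neg_sq_div_two_le (r : ℝ) : r * Real.exp (-r ^ 2 / 2) ≤ Real.exp (-1 / 2) := by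
  have h : r ≤ Real.exp ((r ^ 2 - 1) / 2) := by
    nlinarith [Real.add_one_le_exp ((r ^ 2 - 1) / 2), sq_nonneg (r - 1)]
  calc r * Real.exp (-r ^ 2 / 2) ≤ Real.exp ((r ^ 2 - 1) / 2) * Real.exp (-r ^ 2 / 2) := by gcongr
    _ = Real.exp (-1 / 2) := by rw [← Real.exp_add]; ring_nf

lemma iSup_sqrt_dotProduct_self_mul_exp {ι : Type*} [Fintype ι] [Nonempty ι] :
    ⨆ ξ : ι → ℝ, √(ξ ⬝ᵥ ξ) * Real.exp (-(ξ ⬝ᵥ ξ) / 2) = Real.exp (-1 / 2) := by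
  have hle : ∀ ξ : ι → ℝ, √(ξ ⬝ᵥ ξ) * Real.exp (-(ξ ⬝ᵥ ξ) / 2) ≤ Real.exp (-1 / 2) := by
    intro ξ
    have hξ : 0 ≤ ξ ⬝ᵥ ξ := by simpa using dotProduct_self_star_nonneg ξ
    simpa [Real.sq_sqrt hξ] using mul_exp_neg_sq_div_two_le √(ξ ⬝ᵥ ξ)
  classical
  obtain ⟨i⟩ := ‹Nonempty ι›
  refine le_antisymm (ciSup_le hle) (le_ciSup_of_le ⟨_, Set.forall_mem_range.2 hle⟩ (Pi.single i 1) ?_)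
  simp

lemma dotProduct_inv_mulVec_eq_of_mul_mul_transpose_eq_one {ι R : Type*} [Fintype ι]
    [DecidableEq ι] [CommRing R] {S W : Matrix ι ι R} (hW : W * S * Wᵀ = 1) (m : ι → R) :
    m ⬝ᵥ S⁻¹ *ᵥ m = W *ᵥ m ⬝ᵥ W *ᵥ m := by
  have hinv : S⁻¹ = Wᵀ * W := Matrix.inv_eq_right_inv (by
    rw [← Matrix.mul_assoc, mul_eq_one_comm, ← Matrix.mul_assoc]
    exact hW)
  rw [hinv, ← mulVec_mulVec, dotProduct_mulVec, vecMul_transpose]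

theorem stmt18_general {n : ℕ} (m : Fin n → ℝ) (hm : m ≠ 0)
    (S W : Matrix (Fin n) (Fin n) ℝ) (hW : W * S * Wᵀ = 1) :
    tauIdx ((stdGaussian n).map (· + W.mulVec m))
      = (1 / (2 * Real.sqrt (Real.exp 1))) * (1 / Real.sqrt (m ⬝ᵥ S⁻¹.mulVec m)) := by
  have : Nonempty (Fin n) := by
    obtain ⟨i, -⟩ := Function.ne_iff.mp hm
    exact ⟨i⟩
  rw [stdGaussian_map_add, tauIdx_pi_gaussianReal, iSup_sqrt_dotProduct_self_mul_exp,
    dotProduct_inv_mulVec_eq_of_mul_mul_transpose_eq_one hW, ← Real.exp_half, neg_div,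
    Real.exp_neg]
  ring

/-- For a Gaussian `μ = 𝒩(m, Σ)` with `Σ` invertible (positive definite) and
`m ≠ 0`, whose whitened version is `μ* = 𝒩(W m, I)` with `W Σ Wᵀ = 1`, the
scaling-invariant index equals `τ(μ) = (2√e)⁻¹ (mᵀ Σ⁻¹ m)^{-1/2}`. -/
theorem stmt18 {n : ℕ} (m : Fin n → ℝ) (hm : m ≠ 0)
    (S W : Matrix (Fin n) (Fin n) ℝ) (hS : S.PosDef) (hW : W * S * Wᵀ = 1) :
    tauIdx ((stdGaussian n).map (· + W.mulVec m))
      = (1 / (2 * Real.sqrt (Real.exp 1))) * (1 / Real.sqrt (m ⬝ᵥ S⁻¹.mulVec m)) :=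
  stmt18_general m hm S W hW
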